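/- arXiv:2301.12933 — 3 statements merged into one kernel-verified Lean document; each statement's English description precedes it below -/
import Mathlib

section
/- For graphs G and H each with at least two vertices, the edge-connectivity of the Cartesian product satisfies λ(G □ H) = min{λ(G)·|V(H)|, λ(H)·|V(G)|, δ(G)+δ(H)}. -/
open SimpleGraph

/-- `T` is an `S`-Steiner tree in `G`: a subgraph of `G` that is a tree containing `S`. -/
def IsSteinerTree {V : Type*} (G : SimpleGraph V) (S : Set V) (T : G.Subgraph) : Prop :=
  S ⊆ T.verts ∧ T.coe.IsTree

/-- There exist `n` pairwise edge-disjoint `S`-Steiner trees in `G`. -/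
def HasEDSteinerTrees {V : Type*} (G : SimpleGraph V) (S : Set V) (n : ℕ) : Prop :=
  ∃ f : Fin n → G.Subgraph, (∀ i, IsSteinerTree G S (f i)) ∧
    ∀ i j, i ≠ j → Disjoint (f i).edgeSet (f j).edgeSet

/-- Generalized local edge-connectivity: max number of pairwise edge-disjoint S-Steiner trees. -/
noncomputable def steinerLambda {V : Type*} (G : SimpleGraph V) (S : Set V) : ℕ :=
  sSup {n | HasEDSteinerTrees G S n}

/-- Generalized k-edge-connectivity. -/
noncomputable def genLambda {V : Type*} [Fintype V] (G : SimpleGraph V) (k : ℕ) : ℕ :=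
  sInf {m | ∃ S : Finset V, S.card = k ∧ steinerLambda G ↑S = m}

/-- Ordinary edge-connectivity ("cut" version). -/
noncomputable def edgeConn {V : Type*} [Fintype V] (G : SimpleGraph V) : ℕ :=
  sInf {n | ∃ M : Finset (Sym2 V), M.card = n ∧ ↑M ⊆ G.edgeSet ∧
    ¬ (G.deleteEdges ↑M).Connected}

/-- Minimum degree. -/
noncomputable def minDeg {V : Type*} [Fintype V] (G : SimpleGraph V) : ℕ :=
  @SimpleGraph.minDegree V G _ (Classical.decRel _)

/-- There exist `n` pairwise edge-disjoint spanning trees of `G`. -/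
def HasEDSpanningTrees {V : Type*} (G : SimpleGraph V) (n : ℕ) : Prop :=
  ∃ f : Fin n → G.Subgraph, (∀ i, (f i).IsSpanning ∧ (f i).coe.IsTree) ∧
    ∀ i j, i ≠ j → Disjoint (f i).edgeSet (f j).edgeSet

/-- Maximum number of pairwise edge-disjoint spanning trees. -/
noncomputable def spanningTreePacking {V : Type*} (G : SimpleGraph V) : ℕ :=
  sSup {n | HasEDSpanningTrees G n}

/-!
Upper bounds: a minimum cut of `G`, repeated in every copy `α × {b}`, leaves a subgraph of
`(G minus the cut) □ H`, which is disconnected; symmetrically for `H`; and isolating a vertex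
`(a, b)` with `a`, `b` of minimum degree costs `δ(G) + δ(H)` edges.

Lower bound: let `M` have fewer edges than all three quantities. A disconnected copy of `G`
contains at least `λ(G)` edges of `M`, so some copy `α × {b₀}` of `G` and some copy `{a₀} × β`
of `H` stay connected, and every vertex on a connected copy is reachable from `(a₀, b₀)`. An
unreachable vertex `(a, b)` lies on disconnected copies only, and its edges towards connected
copies all belong to `M`. With `A`, `B` indexing the disconnected copies of `H`, `G`, this gives
`deg a ≤ |A| - 1 + |M ∩ (α × {b})|` and `deg b ≤ |B| - 1 + |M ∩ ({a} × β)|`, while each of the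
other disconnected copies carries at least one more edge of `M`; so `|M| ≥ δ(G) + δ(H)`.
-/

open Finset

section EdgeConn

variable {V : Type*} [Fintype V] {G : SimpleGraph V}

lemma edgeConn_le_card (M : Finset (Sym2 V)) (h : ¬ (G.deleteEdges ↑M).Connected) :
    edgeConn G ≤ #M := by
  classical
  unfold edgeConn
  refine le_trans (Nat.sInf_le (m := #(M.filter (· ∈ G.edgeSet)))
    ⟨_, rfl, fun e he => (mem_filter.1 he).2, ?_⟩) (card_filter_le _ _)
  rw [deleteEdges_eq_inter_edgeSet] at h
  rw [coe_filter]
  exact h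

variable (G) in
lemma exists_card_eq_edgeConn [Nontrivial V] :
    ∃ M : Finset (Sym2 V), #M = edgeConn G ∧ ↑M ⊆ G.edgeSet ∧ ¬ (G.deleteEdges ↑M).Connected := by
  classical
  refine Nat.sInf_mem (s := {n | ∃ M : Finset (Sym2 V), #M = n ∧ ↑M ⊆ G.edgeSet ∧
    ¬ (G.deleteEdges ↑M).Connected}) ⟨_, G.edgeFinset, rfl, by simp, ?_⟩
  simpa using not_connected_bot

lemma le_edgeConn [Nontrivial V] {n : ℕ}
    (h : ∀ M : Finset (Sym2 V), ↑M ⊆ G.edgeSet → #M < n → (G.deleteEdges ↑M).Connected) :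
    n ≤ edgeConn G := by
  obtain ⟨M, hM, hsub, hdis⟩ := exists_card_eq_edgeConn G
  by_contra! hlt
  exact hdis (h M hsub (hM ▸ hlt))

lemma isEdgeConnected_edgeConn : G.IsEdgeConnected (edgeConn G) := by
  intro u v s hs
  lift s to Finset (Sym2 V) using Set.finite_of_encard_le_coe hs.le
  by_contra h
  rw [Set.encard_coe_eq_coe_finsetCard, Nat.cast_lt] at hs
  exact (edgeConn_le_card s fun hc => h (hc.preconnected u v)).not_gt hs

lemma edgeConn_le_of_iso {W : Type*} [Fintype W] [Nontrivial V] {G' : SimpleGraph W}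
    (e : G ≃g G') : edgeConn G' ≤ edgeConn G := by
  obtain ⟨M, hM, -, hdis⟩ := exists_card_eq_edgeConn G
  let e' : G.deleteEdges ↑M ≃g G'.deleteEdges ↑(M.map e.toEmbedding.sym2Map) :=
    ⟨e.toEquiv, fun {a b} => by
      rw [deleteEdges_adj, deleteEdges_adj, coe_map]
      change _ ∧ e.toEmbedding.sym2Map s(a, b) ∉ _ ↔ _
      rw [e.toEmbedding.sym2Map.injective.mem_set_image]
      exact and_congr_left' e.map_adj_iff⟩
  rw [← hM, ← card_map e.toEmbedding.sym2Map]
  exact edgeConn_le_card _ (e'.connected_iff.not.1 hdis)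

lemma edgeConn_le_card_of_not_reachable {W : Type*} {K : SimpleGraph W} (f : G ↪g K)
    {M N : Finset (Sym2 W)}
    (hN : ∀ e : Sym2 V, e.map f ∈ M → e.map f ∈ N)
    (h : ¬ ∀ a b, (K.deleteEdges ↑M).Reachable (f a) (f b)) : edgeConn G ≤ #N := by
  classical
  set P : Finset (Sym2 V) := univ.filter (·.map f ∈ M)
  have hP : ¬ (G.deleteEdges ↑P).Connected := by
    refine fun hc => h fun a b => ?_
    let φ : G.deleteEdges ↑P →g K.deleteEdges ↑M :=
      ⟨f, fun {x y} hxy => ⟨f.map_adj_iff.2 hxy.1, fun hm => hxy.2 (by simpa [P] using hm)⟩⟩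
    exact (hc.preconnected a b).map φ
  calc edgeConn G ≤ #P := edgeConn_le_card P hP
    _ = #(P.image (Sym2.map f)) := (card_image_of_injective _ (Sym2.map.injective f.injective)).symm
    _ ≤ #N := card_le_card <| image_subset_iff.2 fun e he => hN e (mem_filter.1 he).2

lemma minDeg_le_degree (v : V) [Fintype (G.neighborSet v)] : minDeg G ≤ G.degree v := by
  classical
  rw [minDeg]
  convert minDegree_le_degree G v

variable (G) in
lemma exists_degree_eq_minDeg [Nonempty V] [DecidableRel G.Adj] : ∃ v, G.degree v = minDeg G := by
  classical
  obtain ⟨v, hv⟩ := exists_minimal_degree_vertex G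
  exact ⟨v, by rw [minDeg]; convert hv.symm⟩

end EdgeConn

lemma Finset.add_card_erase_le_sum {ι : Type*} [DecidableEq ι] {s : Finset ι} {f : ι → ℕ} {i : ι}
    (hi : i ∈ s) (hf : ∀ j ∈ s, 1 ≤ f j) : f i + #(s.erase i) ≤ ∑ j ∈ s, f j := by
  rw [← add_sum_erase s f hi, card_eq_sum_ones]
  gcongr with j hj
  exact hf j (mem_of_mem_erase hj)

namespace SimpleGraph

variable {V : Type*} {G : SimpleGraph V}

lemma degree_le_card_erase_add_card {X : Type*} {a : V} [Fintype (G.neighborSet a)]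
    [DecidableEq V] (g : V → X) (hg : Function.Injective g) (S : Finset V) {N : Finset X}
    (h : ∀ x, G.Adj a x → x ∉ S → g x ∈ N) : G.degree a ≤ #(S.erase a) + #N := by
  calc G.degree a = #(G.neighborFinset a) := (card_neighborFinset_eq_degree G a).symm
    _ ≤ #(S.erase a ∪ (G.neighborFinset a).filter (· ∉ S)) := by
        refine card_le_card fun x hx => ?_
        have hax := (G.mem_neighborFinset a x).1 hx
        by_cases hxS : x ∈ S
        · exact mem_union_left _ (mem_erase.2 ⟨hax.ne', hxS⟩)
        · exact mem_union_right _ (mem_filter.2 ⟨hx, hxS⟩)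
    _ ≤ #(S.erase a) + #((G.neighborFinset a).filter (· ∉ S)) := card_union_le _ _
    _ ≤ #(S.erase a) + #N := by
        gcongr
        refine card_le_card_of_injOn g (fun x hx => ?_) hg.injOn
        obtain ⟨hx, hxS⟩ := mem_filter.1 hx
        exact h x ((G.mem_neighborFinset a x).1 hx) hxS

end SimpleGraph

section BoxProd

variable {α β : Type*}

-- `e.map Prod.snd = s(b, b)` says that `e` lies in the copy `α × {b}` of `G`.
lemma sum_card_filter_map_eq_diag_le [DecidableEq α] [DecidableEq β] (M : Finset (Sym2 (α × β)))
    (hM : ∀ e ∈ M, ¬ e.IsDiag) (B : Finset β) (A : Finset α) :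
    ∑ b ∈ B, #(M.filter (·.map Prod.snd = s(b, b))) +
      ∑ a ∈ A, #(M.filter (·.map Prod.fst = s(a, a))) ≤ #M := by
  have hβ : (B : Set β).PairwiseDisjoint fun b => M.filter (·.map Prod.snd = s(b, b)) :=
    fun b _ b' _ hne => disjoint_filter.2 fun e _ h h' => hne (by simpa using h.symm.trans h')
  have hα : (A : Set α).PairwiseDisjoint
      fun a => M.filter (·.map Prod.fst = s(a, a)) := fun a _ a' _ hne =>
    disjoint_filter.2 fun e _ h h' => hne (by simpa using h.symm.trans h')
  rw [← card_biUnion hβ, ← card_biUnion hα, ← card_union_of_disjoint]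
  · exact card_le_card (union_subset (biUnion_subset.2 fun _ _ => filter_subset _ _)
      (biUnion_subset.2 fun _ _ => filter_subset _ _))
  · simp only [disjoint_biUnion_left, disjoint_biUnion_right]
    intro b _ a _
    refine disjoint_filter.2 fun e he hb ha => hM e he ?_
    induction e with
    | _ x y =>
      simp only [Sym2.map_mk, Sym2.eq_iff, or_self] at hb ha
      simp [Prod.ext_iff, ha, hb]

variable (G : SimpleGraph α) (H : SimpleGraph β) (M : Finset (Sym2 (α × β)))

lemma edgeConn_le_card_leftLayer [Fintype α] [DecidableEq β] (b : β)
    (h : ¬ ∀ a a', ((G □ H).deleteEdges ↑M).Reachable (a, b) (a', b)) :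
    edgeConn G ≤ #(M.filter (·.map Prod.snd = s(b, b))) :=
  edgeConn_le_card_of_not_reachable (boxProdLeft G H b)
    (fun e he => mem_filter.2 ⟨he, by induction e with | _ x y => rfl⟩) h

lemma edgeConn_le_card_rightLayer [Fintype β] [DecidableEq α] (a : α)
    (h : ¬ ∀ b b', ((G □ H).deleteEdges ↑M).Reachable (a, b) (a, b')) :
    edgeConn H ≤ #(M.filter (·.map Prod.fst = s(a, a))) :=
  edgeConn_le_card_of_not_reachable (boxProdRight G H a)
    (fun e he => mem_filter.2 ⟨he, by induction e with | _ x y => rfl⟩) h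

lemma exists_reachable_leftLayer [Fintype α] [Fintype β] [DecidableEq α] [DecidableEq β]
    (hM : ∀ e ∈ M, ¬ e.IsDiag) (h : #M < edgeConn G * Fintype.card β) :
    ∃ b, ∀ a a', ((G □ H).deleteEdges ↑M).Reachable (a, b) (a', b) := by
  by_contra hbad
  have hsum : edgeConn G * Fintype.card β ≤ ∑ b, #(M.filter (·.map Prod.snd = s(b, b))) := by
    rw [mul_comm, ← card_univ, ← smul_eq_mul]
    exact card_nsmul_le_sum _ _ _ fun b _ =>
      edgeConn_le_card_leftLayer G H M b (not_exists.1 hbad b)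
  have := sum_card_filter_map_eq_diag_le M hM univ univ
  omega

lemma exists_reachable_rightLayer [Fintype α] [Fintype β] [DecidableEq α] [DecidableEq β]
    (hM : ∀ e ∈ M, ¬ e.IsDiag) (h : #M < edgeConn H * Fintype.card α) :
    ∃ a, ∀ b b', ((G □ H).deleteEdges ↑M).Reachable (a, b) (a, b') := by
  by_contra hbad
  have hsum : edgeConn H * Fintype.card α ≤ ∑ a, #(M.filter (·.map Prod.fst = s(a, a))) := by
    rw [mul_comm, ← card_univ, ← smul_eq_mul]
    exact card_nsmul_le_sum _ _ _ fun a _ =>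
      edgeConn_le_card_rightLayer G H M a (not_exists.1 hbad a)
  have := sum_card_filter_map_eq_diag_le M hM univ univ
  omega

variable {G H M}

lemma degree_le_of_not_reachable_left [DecidableEq α] [DecidableEq β] {r : α × β} {A : Finset α}
    {a : α} {b : β} [Fintype (G.neighborSet a)]
    (hab : ¬ ((G □ H).deleteEdges ↑M).Reachable r (a, b))
    (hA : ∀ x ∉ A, ((G □ H).deleteEdges ↑M).Reachable r (x, b)) :
    G.degree a ≤ #(A.erase a) + #(M.filter (·.map Prod.snd = s(b, b))) := by
  refine degree_le_card_erase_add_card (fun x => s((a, b), (x, b)))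
    (fun x y hxy => congrArg Prod.fst (Sym2.congr_right.1 hxy)) A
    fun x hax hx => mem_filter.2 ⟨?_, rfl⟩
  by_contra hm
  exact hab ((hA x hx).trans
    (deleteEdges_adj.2 ⟨boxProd_adj_left.2 hax.symm, by rwa [Sym2.eq_swap, mem_coe]⟩).reachable)

lemma degree_le_of_not_reachable_right [DecidableEq α] [DecidableEq β] {r : α × β}
    {B : Finset β} {a : α} {b : β} [Fintype (H.neighborSet b)]
    (hab : ¬ ((G □ H).deleteEdges ↑M).Reachable r (a, b))
    (hB : ∀ y ∉ B, ((G □ H).deleteEdges ↑M).Reachable r (a, y)) :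
    H.degree b ≤ #(B.erase b) + #(M.filter (·.map Prod.fst = s(a, a))) := by
  refine degree_le_card_erase_add_card (fun y => s((a, b), (a, y)))
    (fun x y hxy => congrArg Prod.snd (Sym2.congr_right.1 hxy)) B
    fun y hby hy => mem_filter.2 ⟨?_, rfl⟩
  by_contra hm
  exact hab ((hB y hy).trans
    (deleteEdges_adj.2 ⟨boxProd_adj_right.2 hby.symm, by rwa [Sym2.eq_swap, mem_coe]⟩).reachable)

theorem connected_deleteEdges_boxProd [Fintype α] [Fintype β] (hM : ↑M ⊆ (G □ H).edgeSet)
    (hG : #M < edgeConn G * Fintype.card β) (hH : #M < edgeConn H * Fintype.card α)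
    (hδ : #M < minDeg G + minDeg H) : ((G □ H).deleteEdges ↑M).Connected := by
  classical
  set K := (G □ H).deleteEdges ↑M
  have hdiag : ∀ e ∈ M, ¬ e.IsDiag := fun e he => (G □ H).not_isDiag_of_mem_edgeSet (hM he)
  obtain ⟨b₀, hb₀⟩ := exists_reachable_leftLayer G H M hdiag hG
  obtain ⟨a₀, ha₀⟩ := exists_reachable_rightLayer G H M hdiag hH
  set A := univ.filter fun a => ¬ ∀ b b', K.Reachable (a, b) (a, b')
  set B := univ.filter fun b => ¬ ∀ a a', K.Reachable (a, b) (a', b)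
  have reach_of_notMem_A : ∀ x ∉ A, ∀ y, K.Reachable (a₀, b₀) (x, y) := fun x hx y =>
    (hb₀ a₀ x).trans (of_not_not (fun h => hx (mem_filter.2 ⟨mem_univ x, h⟩)) b₀ y)
  have reach_of_notMem_B : ∀ y ∉ B, ∀ x, K.Reachable (a₀, b₀) (x, y) := fun y hy x =>
    (ha₀ b₀ y).trans (of_not_not (fun h => hy (mem_filter.2 ⟨mem_univ y, h⟩)) a₀ x)
  refine (connected_iff_exists_forall_reachable K).2 ⟨(a₀, b₀), ?_⟩
  by_contra! ⟨⟨a, b⟩, hab⟩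
  have ha : a ∈ A := by_contra fun h => hab (reach_of_notMem_A a h b)
  have hb : b ∈ B := by_contra fun h => hab (reach_of_notMem_B b h a)
  have hdegG := degree_le_of_not_reachable_left hab fun x hx => reach_of_notMem_A x hx b
  have hdegH := degree_le_of_not_reachable_right hab fun y hy => reach_of_notMem_B y hy a
  have hG₀ : 0 < edgeConn G := Nat.pos_of_ne_zero fun h => by simp [h] at hG
  have hH₀ : 0 < edgeConn H := Nat.pos_of_ne_zero fun h => by simp [h] at hH
  have hsumG := add_card_erase_le_sum hb fun b' hb' =>
    hG₀.trans_le (edgeConn_le_card_leftLayer G H M b' (mem_filter.1 hb').2)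
  have hsumH := add_card_erase_le_sum ha fun a' ha' =>
    hH₀.trans_le (edgeConn_le_card_rightLayer G H M a' (mem_filter.1 ha').2)
  have := sum_card_filter_map_eq_diag_le M hdiag B A
  have := minDeg_le_degree (G := G) a
  have := minDeg_le_degree (G := H) b
  omega

lemma edgeConn_boxProd_le_minDeg_add [Fintype α] [Fintype β] [Nonempty α] [Nonempty β]
    [Nontrivial (α × β)] : edgeConn (G □ H) ≤ minDeg G + minDeg H := by
  classical
  obtain ⟨a, ha⟩ := exists_degree_eq_minDeg G
  obtain ⟨b, hb⟩ := exists_degree_eq_minDeg H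
  calc edgeConn (G □ H) ≤ (G □ H).degree (a, b) := isEdgeConnected_edgeConn.le_degree
    _ = minDeg G + minDeg H := by rw [degree_boxProd, ha, hb]

variable (G H)

lemma edgeConn_boxProd_le_left [Fintype α] [Fintype β] [Nontrivial α] :
    edgeConn (G □ H) ≤ edgeConn G * Fintype.card β := by
  classical
  obtain ⟨M, hM, -, hdis⟩ := exists_card_eq_edgeConn G
  set MM := (M ×ˢ univ).image fun p : Sym2 α × β => p.1.map (·, p.2)
  have hle : (G □ H).deleteEdges ↑MM ≤ G.deleteEdges ↑M □ H := by
    rintro ⟨a, b⟩ ⟨a', b'⟩ hadj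
    obtain ⟨⟨hG, rfl⟩ | hH, hnot⟩ := deleteEdges_adj.1 hadj
    · refine Or.inl ⟨deleteEdges_adj.2 ⟨hG, fun h => hnot ?_⟩, rfl⟩
      exact mem_image.2 ⟨(s(a, a'), b), by simpa using h, rfl⟩
    · exact Or.inr hH
  calc edgeConn (G □ H) ≤ #MM := edgeConn_le_card MM fun h => hdis (h.mono hle).ofBoxProdLeft
    _ ≤ #(M ×ˢ univ) := card_image_le
    _ = edgeConn G * Fintype.card β := by rw [card_product, hM, card_univ]

lemma edgeConn_boxProd_le_right [Fintype α] [Fintype β] [Nonempty α] [Nontrivial β] :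
    edgeConn (G □ H) ≤ edgeConn H * Fintype.card α :=
  (edgeConn_le_of_iso (boxProdComm H G)).trans (edgeConn_boxProd_le_left H G)

end BoxProd

/-- λ(G □ H) = min{λ(G)|V(H)|, λ(H)|V(G)|, δ(G)+δ(H)}. -/
theorem stmt1 {α β : Type*} [Fintype α] [Fintype β]
    (G : SimpleGraph α) (H : SimpleGraph β)
    (hG : 2 ≤ Fintype.card α) (hH : 2 ≤ Fintype.card β) :
    edgeConn (G □ H) =
      min (min (edgeConn G * Fintype.card β) (edgeConn H * Fintype.card α))
        (minDeg G + minDeg H) := by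
  have : Nontrivial α := Fintype.one_lt_card_iff_nontrivial.1 hG
  have : Nontrivial β := Fintype.one_lt_card_iff_nontrivial.1 hH
  refine le_antisymm (le_min (le_min (edgeConn_boxProd_le_left G H)
    (edgeConn_boxProd_le_right G H)) edgeConn_boxProd_le_minDeg_add) (le_edgeConn fun M hM hlt => ?_)
  simp only [lt_min_iff] at hlt
  exact connected_deleteEdges_boxProd hM hlt.1.1 hlt.1.2 hlt.2
end

section
/- For connected graphs G and H with n = |V(G)|·|V(H)|, the maximum number of pairwise edge-disjoint spanning trees of G □ H is at least the sum of the maximum numbers of pairwise edge-disjoint spanning trees of G and of H, minus 1; equivalently λ_n(G □ H) ≥ λ_{|V(G)|}(G) + λ_{|V(H)|}(H) − 1. -/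
open SimpleGraph

/-!
Take edge-disjoint spanning trees `T₀, …, T_m` of `G` and `F₀, …, F_n` of `H`, and orient `T₀`
and `F₀` towards roots `r` and `s` by breadth-first search. For `i ≥ 1`, the copies of `T_i` in
all rows of `G □ H`, joined by one copy of every oriented edge of `F₀`, placed in a column
`col i b` chosen according to its child end `b`, form a connected spanning subgraph; symmetrically
for each `F_j`, with the edges of `T₀` placed in rows `row j a`. The oriented edges of `T₀` and
`F₀` left over in all rows and columns form one more connected spanning subgraph, provided no
vertex `(a, b)` loses both of its edges towards the root, i.e. `col i (row j a) ≠ a`. Such a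
choice exists with `col i b ∈ {u i, v i}` and `row j a ∈ {u' j, v' j}` for `2m + 2n` reserved
non-root vertices, and these exist because `m + 1` edge-disjoint spanning trees of `G` need
`(m + 1)(|V(G)| - 1) ≤ |V(G)|(|V(G)| - 1)/2` edges.
-/

open Function

namespace SimpleGraph

section BFSTree

variable {V : Type*} {G : SimpleGraph V}

theorem connected_of_forall_exists_adj_lt (f : V → ℕ) (r : V)
    (h : ∀ v, v ≠ r → ∃ w, G.Adj v w ∧ f w < f v) : G.Connected := by
  refine (connected_iff_exists_forall_reachable G).2 ⟨r, fun v => ?_⟩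
  induction hv : f v using Nat.strong_induction_on generalizing v with
  | _ k ih =>
    by_cases hvr : v = r
    · subst hvr
      rfl
    obtain ⟨w, hvw, hw⟩ := h v hvr
    exact (ih (f w) (hv ▸ hw) w rfl).trans hvw.reachable.symm

theorem Connected.exists_adj_dist_lt (hG : G.Connected) {r a : V} (ha : a ≠ r) :
    ∃ b, G.Adj a b ∧ G.dist b r < G.dist a r := by
  obtain ⟨p, hp⟩ := (hG a r).exists_walk_length_eq_dist
  cases p with
  | nil => exact absurd rfl ha
  | cons hab q => exact ⟨_, hab, (dist_le q).trans_lt (by simp at hp; omega)⟩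

open Classical in
noncomputable def parent (G : SimpleGraph V) (r a : V) : V :=
  if h : ∃ b, G.Adj a b ∧ G.dist b r < G.dist a r then h.choose else a

variable {r : V} {S S' : Set V}

theorem Connected.adj_parent (hG : G.Connected) {a : V} (ha : a ≠ r) :
    G.Adj a (G.parent r a) := by
  rw [parent, dif_pos (hG.exists_adj_dist_lt ha)]
  exact (hG.exists_adj_dist_lt ha).choose_spec.1

theorem Connected.dist_parent_lt (hG : G.Connected) {a : V} (ha : a ≠ r) :
    G.dist (G.parent r a) r < G.dist a r := by
  rw [parent, dif_pos (hG.exists_adj_dist_lt ha)]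
  exact (hG.exists_adj_dist_lt ha).choose_spec.2

noncomputable def parentGraph (G : SimpleGraph V) (r : V) (S : Set V) : SimpleGraph V :=
  fromRel fun a b => a ∈ S ∧ a ≠ r ∧ b = G.parent r a

theorem parentGraph_le (hG : G.Connected) : G.parentGraph r S ≤ G := by
  rintro a b ⟨-, ⟨-, ha, rfl⟩ | ⟨-, hb, rfl⟩⟩
  · exact hG.adj_parent ha
  · exact (hG.adj_parent hb).symm

theorem parentGraph_adj_parent (hG : G.Connected) {a : V} (haS : a ∈ S) (ha : a ≠ r) :
    (G.parentGraph r S).Adj a (G.parent r a) :=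
  ⟨(hG.adj_parent ha).ne, .inl ⟨haS, ha, rfl⟩⟩

theorem disjoint_parentGraph (hG : G.Connected) (hS : Disjoint S S') :
    Disjoint (G.parentGraph r S) (G.parentGraph r S') := by
  rw [disjoint_left]
  -- the child end of an edge of the BFS tree is the end farther from `r`
  rintro a b ⟨-, h⟩ ⟨-, h'⟩
  rcases h with ⟨haS, ha, rfl⟩ | ⟨hbS, hb, rfl⟩
  · rcases h' with ⟨haS', -, -⟩ | ⟨-, hb, hab⟩
    · exact Set.disjoint_left.mp hS haS haS'
    · have := hG.dist_parent_lt ha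
      have := hG.dist_parent_lt hb
      rw [← hab] at this
      omega
  · rcases h' with ⟨-, ha, hba⟩ | ⟨hbS', -, -⟩
    · have := hG.dist_parent_lt hb
      have := hG.dist_parent_lt ha
      rw [← hba] at this
      omega
    · exact Set.disjoint_left.mp hS hbS hbS'

theorem parentGraph_iUnion {ι : Sort*} (S : ι → Set V) :
    G.parentGraph r (⋃ i, S i) = ⨆ i, G.parentGraph r (S i) := by
  ext a b
  simp only [parentGraph, fromRel_adj, iSup_adj, Set.mem_iUnion]
  aesop

theorem Connected.parentGraph_univ (hG : G.Connected) (r : V) :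
    (G.parentGraph r Set.univ).Connected :=
  connected_of_forall_exists_adj_lt (G.dist · r) r fun _ ha =>
    ⟨_, parentGraph_adj_parent hG trivial ha, hG.dist_parent_lt ha⟩

end BFSTree

section Grid

variable {α β : Type*}

/-- `G □ H` is the case of the constant families `A = fun _ => G` and `B = fun _ => H`. -/
def gridGraph (A : β → SimpleGraph α) (B : α → SimpleGraph β) : SimpleGraph (α × β) where
  Adj x y := x.2 = y.2 ∧ (A x.2).Adj x.1 y.1 ∨ x.1 = y.1 ∧ (B x.1).Adj x.2 y.2
  symm := ⟨by
    rintro ⟨a, b⟩ ⟨a', b'⟩ (⟨rfl, h⟩ | ⟨rfl, h⟩)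
    exacts [.inl ⟨rfl, h.symm⟩, .inr ⟨rfl, h.symm⟩]⟩
  loopless := ⟨by rintro ⟨a, b⟩ (⟨-, h⟩ | ⟨-, h⟩) <;> exact h.ne rfl⟩

variable {A A' : β → SimpleGraph α} {B B' : α → SimpleGraph β}

theorem gridGraph_le_boxProd {G : SimpleGraph α} {H : SimpleGraph β} (hA : ∀ b, A b ≤ G)
    (hB : ∀ a, B a ≤ H) : gridGraph A B ≤ G □ H := by
  rintro ⟨a, b⟩ ⟨a', b'⟩ (⟨h, hab⟩ | ⟨h, hab⟩)
  exacts [.inl ⟨hA b hab, h⟩, .inr ⟨hB a hab, h⟩]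

theorem disjoint_gridGraph (hA : ∀ b, Disjoint (A b) (A' b)) (hB : ∀ a, Disjoint (B a) (B' a)) :
    Disjoint (gridGraph A B) (gridGraph A' B') := by
  rw [disjoint_left]
  rintro ⟨a, b⟩ ⟨a', b'⟩ (⟨rfl, h⟩ | ⟨rfl, h⟩) (⟨hb, h'⟩ | ⟨ha, h'⟩)
  · exact disjoint_left.mp (hA b) a a' h h'
  · exact h.ne ha
  · exact h.ne hb
  · exact disjoint_left.mp (hB a) b b' h h'

def gridGraphSwap (A : β → SimpleGraph α) (B : α → SimpleGraph β) :
    gridGraph A B ≃g gridGraph B A where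
  toEquiv := Equiv.prodComm α β
  map_rel_iff' := or_comm

theorem connected_gridGraph_of_rows (hA : ∀ b, (A b).Connected) (hB : (⨆ a, B a).Connected) :
    (gridGraph A B).Connected := by
  have hrow : ∀ b a a', (gridGraph A B).Reachable (a, b) (a', b) := fun b a a' =>
    ((hA b).preconnected a a').map ⟨fun x => (x, b), fun h => Or.inl ⟨rfl, h⟩⟩
  have := hB.nonempty
  have := (hA (Classical.arbitrary β)).nonempty
  refine (connected_iff _).2 ⟨fun ⟨a, b⟩ ⟨a', b'⟩ => ?_, inferInstance⟩
  obtain ⟨p⟩ := hB.preconnected b b'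
  induction p generalizing a with
  | nil => exact hrow _ a a'
  | cons hbc _ ih =>
    obtain ⟨c, hc⟩ := iSup_adj.1 hbc
    exact (hrow _ a c).trans ((Adj.reachable (Or.inr ⟨rfl, hc⟩)).trans (ih c))

theorem connected_gridGraph_of_cols (hB : ∀ a, (B a).Connected) (hA : (⨆ b, A b).Connected) :
    (gridGraph A B).Connected :=
  (gridGraphSwap B A).connected_iff.1 (connected_gridGraph_of_rows hB hA)

end Grid

section Packing

variable {V : Type*} {G : SimpleGraph V}

structure IsConnectedPacking {ι : Type*} (T : ι → SimpleGraph V) : Prop where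
  connected : ∀ i, (T i).Connected
  pairwise_disjoint : Pairwise (Disjoint on T)

theorem hasEDSpanningTrees_iff {k : ℕ} :
    HasEDSpanningTrees G k ↔
      ∃ T : Fin k → SimpleGraph V, (∀ i, T i ≤ G) ∧ IsConnectedPacking T := by
  constructor
  · rintro ⟨f, hf, hd⟩
    refine ⟨fun i => (f i).spanningCoe, fun i => (f i).spanningCoe_le,
      fun i => ((f i).spanningCoeEquivCoeOfSpanning (hf i).1).connected_iff.2 (hf i).2.1,
      fun i j hij => ?_⟩
    rw [Function.onFun, ← disjoint_edgeSet, Subgraph.edgeSet_spanningCoe,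
      Subgraph.edgeSet_spanningCoe]
    exact hd i j hij
  · rintro ⟨W, hWG, hW, hd⟩
    choose T hTW hT using fun i => (hW i).exists_isTree_le
    refine ⟨fun i => toSubgraph (T i) ((hTW i).trans (hWG i)),
      fun i => ⟨toSubgraph.isSpanning _ _, ?_⟩, fun i j hij => ?_⟩
    · exact (Subgraph.spanningCoeEquivCoeOfSpanning _ (toSubgraph.isSpanning _ _)).isTree_iff.1
        (hT i)
    · rw [← Subgraph.edgeSet_spanningCoe, ← Subgraph.edgeSet_spanningCoe, disjoint_edgeSet]
      exact (hd hij).mono (hTW i) (hTW j)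

theorem hasEDSpanningTrees_one (hG : G.Connected) : HasEDSpanningTrees G 1 :=
  hasEDSpanningTrees_iff.2 ⟨fun _ => G, fun _ => le_rfl, fun _ => hG, Subsingleton.pairwise⟩

theorem HasEDSpanningTrees.two_mul_le_card [Fintype V] [Nontrivial V] {k : ℕ}
    (h : HasEDSpanningTrees G k) : 2 * k ≤ Fintype.card V := by
  classical
  obtain ⟨T, hTG, hT⟩ := hasEDSpanningTrees_iff.1 h
  set N := Fintype.card V
  have hN : 1 < N := Fintype.one_lt_card
  have hedges : ∀ i, N - 1 ≤ (T i).edgeFinset.card := fun i => by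
    have := (hT.connected i).card_vert_le_card_edgeSet_add_one
    rw [Nat.card_eq_fintype_card, Nat.card_eq_fintype_card, ← edgeFinset_card] at this
    omega
  have hsum : k * (N - 1) ≤ N * (N - 1) / 2 := calc
    k * (N - 1) = ∑ _i : Fin k, (N - 1) := by simp
    _ ≤ ∑ i, (T i).edgeFinset.card := Finset.sum_le_sum fun i _ => hedges i
    _ = (Finset.univ.biUnion fun i => (T i).edgeFinset).card :=
      (Finset.card_biUnion fun i _ j _ hij => by
        simpa using hT.pairwise_disjoint hij).symm
    _ ≤ G.edgeFinset.card :=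
      Finset.card_le_card (Finset.biUnion_subset.2 fun i _ => edgeFinset_mono (hTG i))
    _ ≤ N.choose 2 := card_edgeFinset_le_card_choose_two
    _ = N * (N - 1) / 2 := Nat.choose_two_right N
  have : 2 * k * (N - 1) ≤ N * (N - 1) := by
    have := (Nat.le_div_iff_mul_le two_pos).1 hsum
    linarith
  exact Nat.le_of_mul_le_mul_right this (by omega)

theorem bddAbove_setOf_hasEDSpanningTrees [Fintype V] [Nontrivial V] :
    BddAbove {k | HasEDSpanningTrees G k} :=
  ⟨Fintype.card V, fun k hk => by have := hk.two_mul_le_card; omega⟩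

theorem spanningTreePacking_eq_zero [Subsingleton V] [Nonempty V] : spanningTreePacking G = 0 := by
  have hall : ∀ k, HasEDSpanningTrees G k := fun k =>
    hasEDSpanningTrees_iff.2 ⟨fun _ => G, fun _ => le_rfl, fun _ => .of_subsingleton,
      fun _ _ _ => disjoint_left.2 fun a b h => absurd (Subsingleton.elim a b) h.ne⟩
  rw [spanningTreePacking, csSup_of_not_bddAbove fun ⟨k, hk⟩ => by
    have := hk (hall (k + 1)); omega, csSup_empty]
  rfl

theorem Connected.exists_hasEDSpanningTrees_succ [Fintype V] (hG : G.Connected) :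
    ∃ m, spanningTreePacking G ≤ m + 1 ∧ 2 * m < Fintype.card V ∧
      HasEDSpanningTrees G (m + 1) := by
  have := hG.nonempty
  rcases subsingleton_or_nontrivial V with hV | hV
  · exact ⟨0, by simp [spanningTreePacking_eq_zero], Fintype.card_pos, hasEDSpanningTrees_one hG⟩
  · have hp : HasEDSpanningTrees G (spanningTreePacking G) :=
      Nat.sSup_mem ⟨1, hasEDSpanningTrees_one hG⟩ bddAbove_setOf_hasEDSpanningTrees
    have h1p : 1 ≤ spanningTreePacking G :=
      le_csSup bddAbove_setOf_hasEDSpanningTrees (hasEDSpanningTrees_one hG)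
    have := hp.two_mul_le_card
    exact ⟨spanningTreePacking G - 1, by omega, by omega, by rwa [Nat.sub_add_cancel h1p]⟩

end Packing

section BoxPacking

variable {α β : Type*} {m n : ℕ}

/-- In `boxPackingGraph`, the subgraph `some (.inl i)` passes from row `b` to its parent row in
column `col i b`, and `some (.inr j)` from column `a` to its parent column in row `row j a`. -/
structure IsCrossingPlan (r : α) (s : β) (col : Fin m → β → α) (row : Fin n → α → β) : Prop where
  col_injective : ∀ b, Injective (col · b)
  col_ne : ∀ i b, col i b ≠ r
  row_injective : ∀ a, Injective (row · a)
  row_ne : ∀ j a, row j a ≠ s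
  col_row_ne : ∀ i j a, col i (row j a) ≠ a

theorem exists_isCrossingPlan [Fintype α] [Fintype β] (r : α) (s : β)
    (hm : 2 * m < Fintype.card α) (hn : 2 * n < Fintype.card β) :
    ∃ col row, IsCrossingPlan (m := m) (n := n) r s col row := by
  classical
  obtain ⟨e⟩ : Nonempty (Fin m ⊕ Fin m ↪ {a // a ≠ r}) :=
    Embedding.nonempty_of_card_le (by simp [Fintype.card_subtype_compl]; omega)
  obtain ⟨e'⟩ : Nonempty (Fin n ⊕ Fin n ↪ {b // b ≠ s}) :=
    Embedding.nonempty_of_card_le (by simp [Fintype.card_subtype_compl]; omega)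
  set u : Fin m → α := fun i => e (.inl i)
  set v : Fin m → α := fun i => e (.inr i)
  set u' : Fin n → β := fun j => e' (.inl j)
  set v' : Fin n → β := fun j => e' (.inr j)
  have hv : ∀ i i', v i ≠ u i' := fun i i' h => by simpa using e.injective (Subtype.ext h)
  have hv' : ∀ j j', v' j ≠ u' j' := fun j j' h => by simpa using e'.injective (Subtype.ext h)
  refine ⟨fun i b => if b ∈ Set.range u' then v i else u i,
    fun j a => if a ∈ Set.range u then u' j else v' j, ⟨?_, ?_, ?_, ?_, ?_⟩⟩
  · intro b i i' h
    split_ifs at h <;> simpa using e.injective (Subtype.ext h)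
  · intro i b
    split_ifs <;> exact (e _).2
  · intro a j j' h
    split_ifs at h <;> simpa using e'.injective (Subtype.ext h)
  · intro j a
    split_ifs <;> exact (e' _).2
  · intro i j a
    by_cases ha : a ∈ Set.range u
    · obtain ⟨i', rfl⟩ := ha
      simp only [Set.mem_range_self, if_true]
      exact hv i i'
    · have : v' j ∉ Set.range u' := fun ⟨j', h⟩ => hv' j j' h.symm
      simp only [ha, this, if_false]
      exact fun h => ha ⟨i, h⟩

variable (T : Fin (m + 1) → SimpleGraph α) (F : Fin (n + 1) → SimpleGraph β) (r : α) (s : β)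
  (col : Fin m → β → α) (row : Fin n → α → β)

noncomputable def boxPackingGraph : Option (Fin m ⊕ Fin n) → SimpleGraph (α × β)
  | some (.inl i) =>
    gridGraph (fun _ => T i.succ) fun a => (F 0).parentGraph s {b | col i b = a}
  | some (.inr j) =>
    gridGraph (fun b => (T 0).parentGraph r {a | row j a = b}) fun _ => F j.succ
  | none =>
    gridGraph (fun b => (T 0).parentGraph r {a | ∀ j, row j a ≠ b})
      fun a => (F 0).parentGraph s {b | ∀ i, col i b ≠ a}

variable {T F r s col row}

theorem boxPackingGraph_le {G : SimpleGraph α} {H : SimpleGraph β} (hTG : ∀ i, T i ≤ G)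
    (hFH : ∀ j, F j ≤ H) (hT₀ : (T 0).Connected) (hF₀ : (F 0).Connected)
    (w : Option (Fin m ⊕ Fin n)) : boxPackingGraph T F r s col row w ≤ G □ H := by
  have hT₀G : ∀ S, (T 0).parentGraph r S ≤ G := fun _ => (parentGraph_le hT₀).trans (hTG 0)
  have hF₀H : ∀ S, (F 0).parentGraph s S ≤ H := fun _ => (parentGraph_le hF₀).trans (hFH 0)
  rcases w with _ | i | j <;> simp only [boxPackingGraph]
  · exact gridGraph_le_boxProd (fun _ => hT₀G _) (fun _ => hF₀H _)
  · exact gridGraph_le_boxProd (fun _ => hTG _) (fun _ => hF₀H _)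
  · exact gridGraph_le_boxProd (fun _ => hT₀G _) (fun _ => hFH _)

theorem connected_boxPackingGraph_none (hT₀ : (T 0).Connected) (hF₀ : (F 0).Connected)
    (hP : IsCrossingPlan r s col row) : (boxPackingGraph T F r s col row none).Connected := by
  refine connected_of_forall_exists_adj_lt (fun x => (T 0).dist x.1 r + (F 0).dist x.2 s) (r, s) ?_
  rintro ⟨a, b⟩ hab
  simp only [boxPackingGraph]
  by_cases hh : a ≠ r ∧ ∀ j, row j a ≠ b
  · have := hT₀.dist_parent_lt hh.1
    exact ⟨((T 0).parent r a, b), .inl ⟨rfl, parentGraph_adj_parent hT₀ hh.2 hh.1⟩, by dsimp; omega⟩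
  -- otherwise the vertical edge towards `s` is still present, thanks to `col_row_ne`
  have hb : b ≠ s := by
    rintro rfl
    exact hh ⟨fun ha => hab (by rw [ha]), fun j => hP.row_ne j a⟩
  have hcol : ∀ i, col i b ≠ a := by
    intro i
    by_cases ha : a = r
    · exact ha ▸ hP.col_ne i b
    · obtain ⟨j, rfl⟩ : ∃ j, row j a = b := by simpa [ha] using hh
      exact hP.col_row_ne i j a
  have := hF₀.dist_parent_lt hb
  exact ⟨(a, (F 0).parent s b), .inr ⟨rfl, parentGraph_adj_parent hF₀ hcol hb⟩, by dsimp; omega⟩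

theorem connected_boxPackingGraph (hT : ∀ i, (T i).Connected) (hF : ∀ j, (F j).Connected)
    (hP : IsCrossingPlan r s col row) (w : Option (Fin m ⊕ Fin n)) :
    (boxPackingGraph T F r s col row w).Connected := by
  rcases w with _ | i | j <;> simp only [boxPackingGraph]
  · exact connected_boxPackingGraph_none (hT 0) (hF 0) hP
  · refine connected_gridGraph_of_rows (fun _ => hT _) ?_
    rw [← parentGraph_iUnion, Set.iUnion_eq_univ_iff.2 fun b => ⟨col i b, rfl⟩]
    exact (hF 0).parentGraph_univ s
  · refine connected_gridGraph_of_cols (fun _ => hF _) ?_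
    rw [← parentGraph_iUnion, Set.iUnion_eq_univ_iff.2 fun a => ⟨row j a, rfl⟩]
    exact (hT 0).parentGraph_univ r

theorem pairwise_disjoint_boxPackingGraph (hT : IsConnectedPacking T)
    (hF : IsConnectedPacking F) (hP : IsCrossingPlan r s col row) :
    Pairwise (Disjoint on boxPackingGraph T F r s col row) := by
  have hT₀ : ∀ (i : Fin m) S, Disjoint (T i.succ) ((T 0).parentGraph r S) := fun i _ =>
    (hT.pairwise_disjoint (Fin.succ_ne_zero i)).mono_right (parentGraph_le (hT.connected 0))
  have hF₀ : ∀ (j : Fin n) S, Disjoint ((F 0).parentGraph s S) (F j.succ) := fun j _ =>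
    (hF.pairwise_disjoint (Fin.succ_ne_zero j)).symm.mono_left (parentGraph_le (hF.connected 0))
  set W := boxPackingGraph T F r s col row with hW
  have hXY : ∀ i j, Disjoint (W (some (.inl i))) (W (some (.inr j))) := fun i j => by
    simp only [hW, boxPackingGraph]
    exact disjoint_gridGraph (fun _ => hT₀ i _) fun _ => hF₀ j _
  have hXZ : ∀ i, Disjoint (W (some (.inl i))) (W none) := fun i => by
    simp only [hW, boxPackingGraph]
    exact disjoint_gridGraph (fun _ => hT₀ i _) fun _ => disjoint_parentGraph (hF.connected 0)
      (Set.disjoint_left.2 fun _ hb hb' => hb' i hb)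
  have hYZ : ∀ j, Disjoint (W (some (.inr j))) (W none) := fun j => by
    simp only [hW, boxPackingGraph]
    exact disjoint_gridGraph (fun _ => disjoint_parentGraph (hT.connected 0)
      (Set.disjoint_left.2 fun _ ha ha' => ha' j ha)) fun _ => (hF₀ j _).symm
  have hXX : ∀ i i', i ≠ i' → Disjoint (W (some (.inl i))) (W (some (.inl i'))) :=
    fun i i' hii' => by
      simp only [hW, boxPackingGraph]
      exact disjoint_gridGraph (fun _ => hT.pairwise_disjoint ((Fin.succ_injective _).ne hii'))
        fun _ => disjoint_parentGraph (hF.connected 0) (Set.disjoint_left.2 fun b hb hb' =>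
          hii' (hP.col_injective b (hb.trans hb'.symm)))
  have hYY : ∀ j j', j ≠ j' → Disjoint (W (some (.inr j))) (W (some (.inr j'))) :=
    fun j j' hjj' => by
      simp only [hW, boxPackingGraph]
      exact disjoint_gridGraph (fun _ => disjoint_parentGraph (hT.connected 0)
          (Set.disjoint_left.2 fun a ha ha' => hjj' (hP.row_injective a (ha.trans ha'.symm))))
        fun _ => hF.pairwise_disjoint ((Fin.succ_injective _).ne hjj')
  rintro (_ | i | j) (_ | i' | j') hne
  exacts [absurd rfl hne, (hXZ i').symm, (hYZ j').symm, hXZ i,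
    hXX i i' fun h => hne (h ▸ rfl), hXY i j', hYZ j, (hXY i' j).symm,
    hYY j j' fun h => hne (h ▸ rfl)]

end BoxPacking

section BoxProd

variable {α β : Type*} {G : SimpleGraph α} {H : SimpleGraph β}

theorem hasEDSpanningTrees_boxProd [Fintype α] [Fintype β] {m n : ℕ}
    (hG : HasEDSpanningTrees G (m + 1)) (hH : HasEDSpanningTrees H (n + 1))
    (hm : 2 * m < Fintype.card α) (hn : 2 * n < Fintype.card β) :
    HasEDSpanningTrees (G □ H) (m + n + 1) := by
  obtain ⟨T, hTG, hT⟩ := hasEDSpanningTrees_iff.1 hG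
  obtain ⟨F, hFH, hF⟩ := hasEDSpanningTrees_iff.1 hH
  obtain ⟨r⟩ := (hT.connected 0).nonempty
  obtain ⟨s⟩ := (hF.connected 0).nonempty
  obtain ⟨col, row, hP⟩ := exists_isCrossingPlan r s hm hn
  let e : Option (Fin m ⊕ Fin n) ≃ Fin (m + n + 1) := Fintype.equivFinOfCardEq (by simp)
  exact hasEDSpanningTrees_iff.2 ⟨boxPackingGraph T F r s col row ∘ e.symm,
    fun _ => boxPackingGraph_le hTG hFH (hT.connected 0) (hF.connected 0) _,
    fun _ => connected_boxPackingGraph hT.connected hF.connected hP _,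
    (pairwise_disjoint_boxPackingGraph hT hF hP).comp_of_injective e.symm.injective⟩

theorem spanningTreePacking_add_sub_one_le_boxProd [Fintype α] [Fintype β]
    (hG : G.Connected) (hH : H.Connected) :
    spanningTreePacking G + spanningTreePacking H - 1 ≤ spanningTreePacking (G □ H) := by
  obtain ⟨m, hGm, hm, hGT⟩ := hG.exists_hasEDSpanningTrees_succ
  obtain ⟨n, hHn, hn, hHT⟩ := hH.exists_hasEDSpanningTrees_succ
  have := hG.nonempty
  have := hH.nonempty
  rcases subsingleton_or_nontrivial (α × β) with hαβ | hαβ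
  · have : Subsingleton α := (Prod.fst_surjective (β := β)).subsingleton
    have : Subsingleton β := (Prod.snd_surjective (α := α)).subsingleton
    simp [spanningTreePacking_eq_zero]
  · have : m + n + 1 ≤ spanningTreePacking (G □ H) :=
      le_csSup bddAbove_setOf_hasEDSpanningTrees (hasEDSpanningTrees_boxProd hGT hHT hm hn)
    omega

end BoxProd

end SimpleGraph

theorem steinerLambda_univ {V : Type*} (G : SimpleGraph V) :
    steinerLambda G Set.univ = spanningTreePacking G := by
  simp [steinerLambda, spanningTreePacking, HasEDSteinerTrees, HasEDSpanningTrees, IsSteinerTree,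
    Subgraph.IsSpanning, Set.univ_subset_iff, Set.eq_univ_iff_forall]

theorem genLambda_card {V : Type*} [Fintype V] (G : SimpleGraph V) :
    genLambda G (Fintype.card V) = spanningTreePacking G := by
  have : {k | ∃ S : Finset V, S.card = Fintype.card V ∧ steinerLambda G S = k} =
      {spanningTreePacking G} := by
    ext k
    simp [Finset.card_eq_iff_eq_univ, steinerLambda_univ, eq_comm]
  rw [genLambda, this, csInf_singleton]

/-- the spanning-tree packing number of G □ H is at least the sum of those
    of G and H minus 1; equivalently λ_n(G □ H) ≥ λ_{|V(G)|}(G) + λ_{|V(H)|}(H) − 1. -/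
theorem stmt4 {α β : Type*} [Fintype α] [Fintype β]
    (G : SimpleGraph α) (H : SimpleGraph β)
    (hG : G.Connected) (hH : H.Connected) :
    spanningTreePacking G + spanningTreePacking H - 1 ≤ spanningTreePacking (G □ H) ∧
    genLambda G (Fintype.card α) + genLambda H (Fintype.card β) - 1 ≤
      genLambda (G □ H) (Fintype.card (α × β)) := by
  have h := spanningTreePacking_add_sub_one_le_boxProd hG hH
  exact ⟨h, by simpa only [genLambda_card] using h⟩
end

section
/- Let G and H be connected graphs with λ_k(G) = a and λ_k(H) = b where b ≥ a ≥ ⌊k/2⌋, and let S be a set of k vertices of G □ H whose projections S_G to V(G) and S_H to V(H) each have exactly k distinct elements. Then there exist at least a + b pairwise edge-disjoint S-Steiner trees in G □ H. -/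
open SimpleGraph

/-!
Fix `(x₀, y₀) ∈ S` and take `a` edge-disjoint Steiner trees `Tᵢ` of `G` for `S_G` and `b` of
`H` for `S_H`. Two kinds of connected subgraphs of `G □ H` contain `S`:
a copy of `Tᵢ` in every layer `G × {y}`, `y ∈ S_H \ {y₀}`, tied together by a copy of an
`H`-tree in the fibre `{x₀} × H`; and a copy of an `H`-tree `W_n` in every fibre `{x} × H`,
`x ∈ S_G`, tied together by a copy of some `G`-tree in one layer `G × {w}`.
Reserve `a` of the `H`-trees for the first kind; they are tied at the layer of `y₀`, omitting
the fibre of `x₀`. Every other `W_n` needs its own pair `(m, w_n)`, with `w_n ∈ V(W_n) \ S_H`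
and `T_m` the tying tree, and Hall's theorem provides distinct pairs once any `s` of the
`H`-trees whose vertices outside `S_H` lie in `X` satisfy `s ≤ ⌊k/2⌋ + |X|`. That holds since
each of them has at least `k - 1` edges meeting `S_H`, at least `k` unless it lies inside
`S_H`, and those inside `S_H` share only `k(k-1)/2` edges.
-/

namespace SimpleGraph

variable {V W : Type*} {Γ : SimpleGraph V} {Γ' : SimpleGraph W}

theorem Connected.exists_adj_dist_lt_s8 (h : Γ.Connected) {r v : V} (hv : v ≠ r) :
    ∃ w, Γ.Adj v w ∧ Γ.dist r w < Γ.dist r v := by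
  obtain ⟨p, hp⟩ := h.exists_walk_length_eq_dist v r
  cases p with
  | nil => exact absurd rfl hv
  | cons hadj q =>
    refine ⟨_, hadj, ?_⟩
    rw [dist_comm, dist_comm (u := r)]
    have := dist_le q
    simp only [Walk.length_cons] at hp
    omega

namespace Subgraph

theorem connected_map (f : Γ →g Γ') {U : Γ.Subgraph} (h : U.Connected) :
    (U.map f).Connected := by
  rw [Subgraph.connected_iff'] at h ⊢
  let φ : U.coe →g (U.map f).coe :=
    { toFun := fun v => ⟨f v, v, v.2, rfl⟩
      map_rel' := fun {v w} hvw => ⟨v, w, hvw, rfl, rfl⟩ }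
  exact h.map φ (by rintro ⟨_, v, hv, rfl⟩; exact ⟨⟨v, hv⟩, rfl⟩)

theorem connected_sup_iSup {ι : Type*} {C : Γ.Subgraph} {D : ι → Γ.Subgraph}
    (hC : C.Connected) (hD : ∀ i, (D i).Connected) (hCD : ∀ i, (C ⊓ D i).verts.Nonempty) :
    (C ⊔ ⨆ i, D i).Connected := by
  rw [Subgraph.connected_iff', connected_iff_exists_forall_reachable]
  obtain ⟨u, hu⟩ := hC.nonempty
  have hC_le : C ≤ C ⊔ ⨆ i, D i := le_sup_left
  have hD_le (i) : D i ≤ C ⊔ ⨆ i, D i := (le_iSup D i).trans le_sup_right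
  refine ⟨⟨u, Or.inl hu⟩, ?_⟩
  rintro ⟨v, hv | hv⟩
  · exact (hC.coe.preconnected ⟨u, hu⟩ ⟨v, hv⟩).map (inclusion hC_le)
  · obtain ⟨i, hv⟩ := Set.mem_iUnion.mp (verts_iSup ▸ hv)
    obtain ⟨z, hzC, hzD⟩ := hCD i
    exact ((hC.coe.preconnected ⟨u, hu⟩ ⟨z, hzC⟩).map (inclusion hC_le)).trans
      (((hD i).coe.preconnected ⟨z, hzD⟩ ⟨v, hv⟩).map (inclusion (hD_le i)))

theorem Connected.exists_isTree_le {U : Γ.Subgraph} (hU : U.Connected) :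
    ∃ T ≤ U, T.verts = U.verts ∧ T.coe.IsTree := by
  obtain ⟨T', hle, hT'⟩ := hU.coe.exists_isTree_le
  let T := Subgraph.coeSubgraph (SimpleGraph.toSubgraph T' hle)
  have hverts : T.verts = U.verts := by simp [T]
  let φ : T.coe →g T' :=
    { toFun := fun v => ⟨v, hverts ▸ v.2⟩
      map_rel' := fun {v w} hvw => by
        obtain ⟨_, _, hadj⟩ := (coeSubgraph_adj _ _ _).mp hvw
        exact hadj }
  refine ⟨T, coeSubgraph_le _, hverts, ⟨?_, hT'.isAcyclic.comap φ ?_⟩⟩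
  · exact ((hT'.connected.toSubgraph hle).coeSubgraph).coe
  · intro v w hvw
    exact Subtype.ext (congrArg Subtype.val hvw :)

theorem Connected.exists_injOn_mem_edgeSet {U : Γ.Subgraph} (hU : U.Connected) {r : V}
    (hr : r ∈ U.verts) : ∃ f : V → Sym2 V, Set.InjOn f (U.verts \ {r}) ∧
      ∀ v ∈ U.verts \ {r}, f v ∈ U.edgeSet ∧ v ∈ f v := by
  classical
  let depth : V → ℕ := fun v =>
    if hv : v ∈ U.verts then U.coe.dist ⟨r, hr⟩ ⟨v, hv⟩ else 0
  have hparent : ∀ v ∈ U.verts \ {r}, ∃ w, U.Adj v w ∧ depth w < depth v := by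
    rintro v ⟨hv, hvr⟩
    obtain ⟨w, hvw, hlt⟩ := hU.coe.exists_adj_dist_lt_s8 (r := ⟨r, hr⟩) (v := ⟨v, hv⟩)
      (fun h => hvr (congrArg Subtype.val h))
    refine ⟨w, hvw, ?_⟩
    simpa [depth, hv, w.2] using hlt
  choose! p hpadj hpdepth using hparent
  -- `s(v, p v) = s(w, p w)` with `v ≠ w` would force `p v = w` and `p w = v`, against depth.
  refine ⟨fun v => s(v, p v), ?_, fun v hv => ⟨hpadj v hv, Sym2.mem_mk_left _ _⟩⟩
  intro v hv w hw hvw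
  rcases Sym2.eq_iff.mp hvw with ⟨h, -⟩ | ⟨hvpw, hpvw⟩
  · exact h
  · have hv_lt := hpdepth v hv
    have hw_lt := hpdepth w hw
    rw [hpvw] at hv_lt
    rw [← hvpw] at hw_lt
    omega

end Subgraph

end SimpleGraph

namespace SimpleGraph.Subgraph

variable {β : Type*} {H : SimpleGraph β}

theorem exists_eq_mk_of_mem_edgeSet {W : H.Subgraph} {e : Sym2 β} (he : e ∈ W.edgeSet) {v : β}
    (hv : v ∈ e) : ∃ w ∈ W.verts, v ≠ w ∧ s(v, w) = e := by
  have hadj : W.Adj v (Sym2.Mem.other hv) := by rwa [← Subgraph.mem_edgeSet, Sym2.other_spec hv]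
  exact ⟨_, W.edge_vert hadj.symm, (W.adj_sub hadj).ne, Sym2.other_spec hv⟩

open Finset in
theorem mem_image_offDiag_union_image_product [DecidableEq β] {W : H.Subgraph}
    {A X : Finset β} (hWX : W.verts ⊆ ↑(A ∪ X)) {e : Sym2 β} (he : e ∈ W.edgeSet) {v : β}
    (hvA : v ∈ A) (hve : v ∈ e) :
    e ∈ A.offDiag.image Sym2.mk.uncurry ∪ (A ×ˢ X).image Sym2.mk.uncurry := by
  obtain ⟨w, hw, hvw, rfl⟩ := exists_eq_mk_of_mem_edgeSet he hve
  rcases mem_union.mp (hWX hw) with hwA | hwX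
  · exact mem_union_left _ (mem_image_of_mem _ (mem_offDiag.mpr ⟨hvA, hwA, hvw⟩))
  · exact mem_union_right _ (mem_image_of_mem _ (mem_product.mpr ⟨hvA, hwX⟩))

theorem Connected.exists_finset_incident [DecidableEq β] {W : H.Subgraph} (hW : W.Connected)
    {A : Finset β} (hA : ↑A ⊆ W.verts) :
    ∃ I : Finset (Sym2 β), ↑I ⊆ W.edgeSet ∧ (∀ e ∈ I, ∃ v ∈ A, v ∈ e) ∧
      A.card ≤ I.card + 1 ∧ (¬ W.verts ⊆ A → A.card ≤ I.card) := by
  -- Root the parent edges outside `A` when possible; then every vertex of `A` gets one.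
  obtain ⟨r, hr, hrA⟩ : ∃ r ∈ W.verts, ¬ W.verts ⊆ A → r ∉ A := by
    by_cases h : W.verts ⊆ A
    · exact ⟨_, hW.nonempty.some_mem, fun h' => absurd h h'⟩
    · obtain ⟨r, hr, hrA⟩ := Set.not_subset.mp h
      exact ⟨r, hr, fun _ => hrA⟩
  obtain ⟨f, hf_inj, hf⟩ := hW.exists_injOn_mem_edgeSet hr
  have hA' : ↑(A.erase r) ⊆ W.verts \ {r} := fun v hv => by
    obtain ⟨hvr, hvA⟩ := Finset.mem_erase.mp hv
    exact ⟨hA hvA, hvr⟩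
  have hcard : (A.erase r).card = ((A.erase r).image f).card :=
    (Finset.card_image_of_injOn (hf_inj.mono hA')).symm
  refine ⟨(A.erase r).image f, ?_, ?_, ?_, fun h => ?_⟩
  · simp only [Finset.coe_image]
    rintro _ ⟨v, hv, rfl⟩
    exact (hf v (hA' hv)).1
  · simp only [Finset.mem_image]
    rintro _ ⟨v, hv, rfl⟩
    exact ⟨v, Finset.mem_of_mem_erase hv, (hf v (hA' hv)).2⟩
  · have := Finset.pred_card_le_card_erase (s := A) (a := r)
    omega
  · rw [← hcard, Finset.erase_eq_of_notMem (hrA h)]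

end SimpleGraph.Subgraph

section SteinerPacking

open SimpleGraph Function

variable {V : Type*} {Γ : SimpleGraph V} {S : Set V}

theorem IsSteinerTree.connected {T : Γ.Subgraph} (h : IsSteinerTree Γ S T) : T.Connected :=
  Subgraph.connected_iff'.mpr h.2.connected

theorem hasEDSteinerTrees_zero : HasEDSteinerTrees Γ S 0 :=
  ⟨Fin.elim0, fun i => i.elim0, fun i => i.elim0⟩

theorem HasEDSteinerTrees.mono {m n : ℕ} (h : HasEDSteinerTrees Γ S n) (hmn : m ≤ n) :
    HasEDSteinerTrees Γ S m := by
  obtain ⟨f, hf, hdisj⟩ := h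
  exact ⟨f ∘ Fin.castLE hmn, fun i => hf _,
    fun i j hij => hdisj _ _ ((Fin.castLE_injective hmn).ne hij)⟩

theorem hasEDSteinerTrees_of_subset_singleton {p : V} (hS : S ⊆ {p}) (n : ℕ) :
    HasEDSteinerTrees Γ S n :=
  ⟨fun _ => Γ.singletonSubgraph p, fun _ => ⟨hS, .of_subsingleton⟩,
    fun _ _ _ => by simp [edgeSet_singletonSubgraph]⟩

theorem hasEDSteinerTrees_of_connected {ι : Type*} [Fintype ι] (D : ι → Γ.Subgraph)
    (hD : ∀ i, (D i).Connected) (hS : ∀ i, S ⊆ (D i).verts)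
    (hdisj : Pairwise (Disjoint on fun i => (D i).edgeSet)) :
    HasEDSteinerTrees Γ S (Fintype.card ι) := by
  choose T hTD hTverts hT using fun i => (hD i).exists_isTree_le
  refine ⟨T ∘ (Fintype.equivFin ι).symm, fun i => ⟨(hTverts _).symm ▸ hS _, hT _⟩,
    fun i j hij => ?_⟩
  exact (hdisj ((Fintype.equivFin ι).symm.injective.ne hij)).mono
    (Subgraph.edgeSet_mono (hTD _)) (Subgraph.edgeSet_mono (hTD _))

theorem HasEDSteinerTrees.le_card_edgeSet [Finite V] (hS : S.Nontrivial) {n : ℕ}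
    (h : HasEDSteinerTrees Γ S n) : n ≤ Nat.card Γ.edgeSet := by
  obtain ⟨T, hT, hdisj⟩ := h
  obtain ⟨x, hx, y, hy, hxy⟩ := hS
  have hedge (i : Fin n) : ∃ e, e ∈ (T i).edgeSet := by
    have : Nontrivial (T i).verts :=
      ⟨⟨x, (hT i).1 hx⟩, ⟨y, (hT i).1 hy⟩, by simpa using hxy⟩
    obtain ⟨u, hu⟩ := (hT i).connected.preconnected.exists_adj_of_nontrivial
      ⟨x, (hT i).1 hx⟩
    exact ⟨s(x, u), hu⟩
  choose e he using hedge
  have hinj : Injective fun i => (⟨e i, (T i).edgeSet_subset (he i)⟩ : Γ.edgeSet) := by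
    intro i j hij
    by_contra hne
    have hij : e i = e j := Subtype.ext_iff.mp hij
    exact Set.disjoint_left.mp (hdisj i j hne) (he i) (hij ▸ he j)
  simpa using Nat.card_le_card_of_injective _ hinj

theorem hasEDSteinerTrees_genLambda [Fintype V] (S : Finset V) (hS : 2 ≤ S.card) :
    HasEDSteinerTrees Γ S (genLambda Γ S.card) := by
  have hS' : (S : Set V).Nontrivial := Finset.one_lt_card_iff_nontrivial.mp hS
  have hmem : steinerLambda Γ S ∈ {n | HasEDSteinerTrees Γ S n} :=
    Nat.sSup_mem ⟨0, hasEDSteinerTrees_zero⟩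
      ⟨_, fun _ => HasEDSteinerTrees.le_card_edgeSet hS'⟩
  exact HasEDSteinerTrees.mono hmem (Nat.sInf_le ⟨S, rfl, rfl⟩)

end SteinerPacking

section Counting

open Finset SimpleGraph

variable {β ι : Type*} [DecidableEq β] {H : SimpleGraph β}

theorem le_half_add_of_counts {k s t i c x : ℕ} (hk : 2 ≤ k) (hi : 2 * i = k * k - k)
    (ht : t * (k - 1) ≤ i) (hc : c ≤ k * x) (hs : k * s ≤ i + c + t) : s ≤ k / 2 + x := by
  have h_two_t : 2 * t ≤ k := by
    refine Nat.le_of_mul_le_mul_right ?_ (by omega : 0 < k - 1)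
    calc 2 * t * (k - 1) ≤ 2 * i := by rw [mul_assoc]; omega
      _ = k * (k - 1) := by rw [hi, Nat.mul_sub_one]
  have : 2 * s ≤ k + 2 * x := by
    refine Nat.le_of_mul_le_mul_left ?_ (by omega : 0 < k)
    have : k * k - k + k = k * k := Nat.sub_add_cancel (Nat.le_mul_self k)
    linarith
  omega

theorem card_le_half_card_add_card {W : ι → H.Subgraph} {s : Finset ι} {A X : Finset β}
    (hA : 2 ≤ A.card) (hW : ∀ n ∈ s, (W n).Connected)
    (hAW : ∀ n ∈ s, ↑A ⊆ (W n).verts)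
    (hWX : ∀ n ∈ s, (W n).verts ⊆ ↑(A ∪ X))
    (hdisj : ∀ n ∈ s, ∀ m ∈ s, n ≠ m → Disjoint (W n).edgeSet (W m).edgeSet) :
    s.card ≤ A.card / 2 + X.card := by
  classical
  choose! I hIW hIA hI_card hI_card' using fun n hn => (hW n hn).exists_finset_incident (hAW n hn)
  set k := A.card
  let inner := A.offDiag.image Sym2.mk.uncurry
  let cross := (A ×ˢ X).image Sym2.mk.uncurry
  let tight := s.filter fun n => (W n).verts ⊆ A
  have hIdisj : (s : Set ι).PairwiseDisjoint I := fun n hn m hm hnm =>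
    Finset.disjoint_coe.mp ((hdisj n hn m hm hnm).mono (hIW n hn) (hIW m hm))
  have hI_sub : ∀ n ∈ s, ∀ e ∈ I n, e ∈ inner ∪ cross := fun n hn e he => by
    obtain ⟨v, hvA, hve⟩ := hIA n hn e he
    exact Subgraph.mem_image_offDiag_union_image_product (hWX n hn) (hIW n hn he) hvA hve
  have hI_sub_tight : ∀ n ∈ tight, ∀ e ∈ I n, e ∈ inner := fun n hn e he => by
    obtain ⟨hn, htight⟩ := mem_filter.mp hn
    obtain ⟨v, hvA, hve⟩ := hIA n hn e he
    simpa only [product_empty, image_empty, union_empty] using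
      Subgraph.mem_image_offDiag_union_image_product (X := ∅) (by simpa using htight)
        (hIW n hn he) hvA hve
  have h_inner : 2 * inner.card = k * k - k := by
    rw [Sym2.two_mul_card_image_offDiag, offDiag_card]
  have h_cross : cross.card ≤ k * X.card := card_image_le.trans (card_product A X).le
  have h_all : k * s.card ≤ inner.card + cross.card + tight.card := by
    calc k * s.card = ∑ n ∈ s, k := by rw [sum_const, smul_eq_mul, mul_comm]
      _ ≤ ∑ n ∈ s, ((I n).card + if (W n).verts ⊆ A then 1 else 0) := by
          refine sum_le_sum fun n hn => ?_
          split_ifs with h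
          · exact hI_card n hn
          · exact (hI_card' n hn h).trans (Nat.le_add_right _ _)
      _ = (s.biUnion I).card + tight.card := by
          rw [sum_add_distrib, sum_boole, Nat.cast_id, card_biUnion hIdisj]
      _ ≤ (inner ∪ cross).card + tight.card := by
          gcongr
          exact biUnion_subset.mpr hI_sub
      _ ≤ inner.card + cross.card + tight.card := by gcongr; exact card_union_le _ _
  have h_tight : tight.card * (k - 1) ≤ inner.card := by
    have hdisj' : (tight : Set ι).PairwiseDisjoint I :=
      hIdisj.subset (coe_subset.mpr (filter_subset _ s))
    calc tight.card * (k - 1) = ∑ n ∈ tight, (k - 1) := by rw [sum_const, smul_eq_mul]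
      _ ≤ ∑ n ∈ tight, (I n).card := sum_le_sum fun n hn => by
          have := hI_card n (mem_filter.mp hn).1
          omega
      _ = (tight.biUnion I).card := (card_biUnion hdisj').symm
      _ ≤ inner.card := card_le_card (biUnion_subset.mpr hI_sub_tight)
  exact le_half_add_of_counts hA h_inner h_tight h_cross h_all

end Counting

section Hall

open Finset

theorem exists_finset_card_eq_injOn {ι β : Type*} [Fintype ι] [DecidableEq ι] [DecidableEq β]
    [Nonempty β] {a : ℕ} (ha : a ≤ Fintype.card ι) (out : ι → Finset β)
    (hHall : ∀ s : Finset ι, s.card ≤ a * ((s.biUnion out).card + 1)) :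
    ∃ R : Finset ι, R.card = a ∧
      ∃ c : ι → Fin a × β, Set.InjOn c (↑R)ᶜ ∧ ∀ n ∉ R, (c n).2 ∈ out n := by
  -- `(i, none)` is the `i`-th reserved slot, so at most `a` indices get reserved.
  let t (n : ι) : Finset (Fin a × Option β) := univ ×ˢ insert none ((out n).image some)
  have ht : ∀ s : Finset ι, s.card ≤ (s.biUnion t).card := by
    intro s
    rcases s.eq_empty_or_nonempty with rfl | ⟨n₀, hn₀⟩
    · simp
    calc s.card ≤ a * ((s.biUnion out).card + 1) := hHall s
      _ = ((univ : Finset (Fin a)) ×ˢ insert none ((s.biUnion out).image some)).card := by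
        rw [card_product, card_univ, Fintype.card_fin, card_insert_of_notMem (by simp),
          card_image_of_injective _ (Option.some_injective _)]
      _ ≤ (s.biUnion t).card := by
        refine card_le_card fun p hp => mem_biUnion.mpr ?_
        simp only [mem_product, mem_univ, true_and, mem_insert, mem_image, mem_biUnion] at hp
        rcases hp with hp | ⟨w, ⟨n, hn, hw⟩, hp⟩
        · exact ⟨n₀, hn₀, by simp [t, hp]⟩
        · exact ⟨n, hn,
            mem_product.mpr ⟨mem_univ _, hp ▸ mem_insert_of_mem (mem_image_of_mem _ hw)⟩⟩
  obtain ⟨F, hF_inj, hF⟩ := (all_card_le_biUnion_card_iff_exists_injective t).mp ht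
  let R₀ := univ.filter fun n => (F n).2 = none
  have hR₀ : R₀.card ≤ a := by
    have hinj : Set.InjOn (fun n => (F n).1) R₀ := fun n hn m hm h => by
      have hn : (F n).2 = none := (mem_filter.mp hn).2
      have hm : (F m).2 = none := (mem_filter.mp hm).2
      exact hF_inj (Prod.ext h (hn.trans hm.symm))
    simpa using card_le_card_of_injOn _ (fun _ _ => mem_coe.mpr (mem_univ _)) hinj
  obtain ⟨R, hR₀R, -, hR⟩ :=
    exists_subsuperset_card_eq (subset_univ R₀) hR₀ (by simpa using ha)
  have hsome : ∀ n ∉ R, ∃ w ∈ out n, (F n).2 = some w := by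
    intro n hn
    have hn₀ : (F n).2 ≠ none := fun h => hn (hR₀R (mem_filter.mpr ⟨mem_univ _, h⟩))
    have := hF n
    simp only [t, mem_product, mem_univ, true_and, mem_insert, mem_image] at this
    obtain ⟨w, hw, h⟩ := this.resolve_left hn₀
    exact ⟨w, hw, h.symm⟩
  choose! w hw hFw using hsome
  refine ⟨R, hR, fun n => ((F n).1, w n), fun n hn m hm h => hF_inj ?_, hw⟩
  obtain ⟨h₁, h₂⟩ := Prod.mk.inj h
  exact Prod.ext h₁ (by rw [hFw n hn, hFw m hm, h₂])

end Hall

section Connectors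

open Finset Function SimpleGraph

variable {β : Type*} [Fintype β] [DecidableEq β] {H : SimpleGraph β}

theorem exists_connectors {a b : ℕ} {A : Finset β} (hA : 2 ≤ A.card) (hAa : A.card / 2 ≤ a)
    (hab : a ≤ b) {TH : Fin b → H.Subgraph} (hTH : ∀ n, IsSteinerTree H A (TH n))
    (hTHd : ∀ n m, n ≠ m → Disjoint (TH n).edgeSet (TH m).edgeSet) {y₀ : β}
    (hy₀ : y₀ ∈ A) :
    ∃ (σ : Fin a → Fin b) (d : Fin b → Fin a × β), Injective σ ∧ Injective d ∧
      (∀ i, d (σ i) = (i, y₀)) ∧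
      ∀ n, (d n).2 ∈ (TH n).verts ∧ ((d n).2 ∈ A → (d n).2 = y₀) := by
  have : Nonempty β := ⟨y₀⟩
  let out n := (TH n).verts.toFinite.toFinset \ A
  have hHall (s : Finset (Fin b)) : s.card ≤ a * ((s.biUnion out).card + 1) := by
    have hcover : ∀ n ∈ s, (TH n).verts ⊆ ↑(A ∪ s.biUnion out) := by
      intro n hn v hv
      by_cases hvA : v ∈ A
      · exact mem_union_left _ hvA
      · exact mem_union_right _ (mem_biUnion.mpr ⟨n, hn, by simp [out, hv, hvA]⟩)
    have := card_le_half_card_add_card hA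
      (fun n _ => (hTH n).connected) (fun n _ => (hTH n).1) hcover
      fun n _ m _ => hTHd n m
    have hX := Nat.le_mul_of_pos_left (s.biUnion out).card (by omega : 0 < a)
    rw [mul_add, mul_one]
    omega
  obtain ⟨R, hR, c, hc_inj, hc_out⟩ :=
    exists_finset_card_eq_injOn (by simpa using hab) out hHall
  let e : Fin a ≃ R := (R.equivFinOfCardEq hR).symm
  have hc_out' n (hn : n ∉ R) : (c n).2 ∈ (TH n).verts \ A := by
    simpa [out] using hc_out n hn
  refine ⟨fun i => e i, fun n => if h : n ∈ R then (e.symm ⟨n, h⟩, y₀) else c n,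
    Subtype.val_injective.comp e.injective, fun n m h => ?_, fun i => by simp, ?_⟩
  · by_cases hn : n ∈ R <;> by_cases hm : m ∈ R <;>
      simp only [hn, hm, dite_true, dite_false] at h
    · simpa using e.symm.injective (Prod.mk.inj h).1
    · exact absurd (h ▸ hy₀) (hc_out' m hm).2
    · exact absurd (h ▸ hy₀) (hc_out' n hn).2
    · exact hc_inj hn hm h
  · intro n
    by_cases hn : n ∈ R
    · simp only [dif_pos hn]
      exact ⟨(hTH n).1 hy₀, fun _ => trivial⟩
    · simpa only [dif_neg hn] using ⟨(hc_out' n hn).1, fun h => absurd h (hc_out' n hn).2⟩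

end Connectors

namespace SimpleGraph

variable {α β : Type*} {G : SimpleGraph α} {H : SimpleGraph β}

def boxLayer (H : SimpleGraph β) (T : G.Subgraph) (y : β) : (G □ H).Subgraph :=
  T.map (G.boxProdLeft H y).toHom

def boxFiber (G : SimpleGraph α) (x : α) (W : H.Subgraph) : (G □ H).Subgraph :=
  W.map (G.boxProdRight H x).toHom

theorem mk_mem_boxLayer_verts {T : G.Subgraph} {x : α} (hx : x ∈ T.verts) (y : β) :
    (x, y) ∈ (boxLayer H T y).verts :=
  ⟨x, hx, rfl⟩

theorem mk_mem_boxFiber_verts {W : H.Subgraph} (x : α) {y : β} (hy : y ∈ W.verts) :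
    (x, y) ∈ (boxFiber G x W).verts :=
  ⟨y, hy, rfl⟩

theorem boxLayer_connected {T : G.Subgraph} (hT : T.Connected) (y : β) :
    (boxLayer H T y).Connected :=
  Subgraph.connected_map _ hT

theorem boxFiber_connected {W : H.Subgraph} (hW : W.Connected) (x : α) :
    (boxFiber G x W).Connected :=
  Subgraph.connected_map _ hW

theorem of_mem_boxLayer_edgeSet {T : G.Subgraph} {y : β} {e : Sym2 (α × β)}
    (he : e ∈ (boxLayer H T y).edgeSet) :
    e.map Prod.fst ∈ T.edgeSet ∧ ∀ p ∈ e, p.2 = y := by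
  obtain ⟨e, he', rfl⟩ := (Subgraph.edgeSet_map _ _ ▸ he :)
  refine ⟨by simpa [Sym2.map_map, Function.comp_def] using he', fun p hp => ?_⟩
  obtain ⟨x, -, rfl⟩ := Sym2.mem_map.mp hp
  rfl

theorem of_mem_boxFiber_edgeSet {W : H.Subgraph} {x : α} {e : Sym2 (α × β)}
    (he : e ∈ (boxFiber G x W).edgeSet) :
    e.map Prod.snd ∈ W.edgeSet ∧ ∀ p ∈ e, p.1 = x := by
  obtain ⟨e, he', rfl⟩ := (Subgraph.edgeSet_map _ _ ▸ he :)
  refine ⟨by simpa [Sym2.map_map, Function.comp_def] using he', fun p hp => ?_⟩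
  obtain ⟨y, -, rfl⟩ := Sym2.mem_map.mp hp
  rfl

theorem disjoint_boxLayer_boxFiber (T : G.Subgraph) (y : β) (x : α) (W : H.Subgraph) :
    Disjoint (boxLayer H T y).edgeSet (boxFiber G x W).edgeSet := by
  refine Set.disjoint_left.mpr fun e heT heW => ?_
  obtain ⟨heT, -⟩ := of_mem_boxLayer_edgeSet heT
  obtain ⟨-, hx⟩ := of_mem_boxFiber_edgeSet heW
  induction e with
  | _ p q =>
    rw [Sym2.map_mk, hx p (Sym2.mem_mk_left p q), hx q (Sym2.mem_mk_right p q)] at heT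
    exact (T.adj_sub heT).ne rfl

theorem disjoint_boxLayer_boxLayer {T T' : G.Subgraph} {y y' : β}
    (h : y = y' → Disjoint T.edgeSet T'.edgeSet) :
    Disjoint (boxLayer H T y).edgeSet (boxLayer H T' y').edgeSet := by
  refine Set.disjoint_left.mpr fun e he he' => ?_
  obtain ⟨heT, hy⟩ := of_mem_boxLayer_edgeSet he
  obtain ⟨heT', hy'⟩ := of_mem_boxLayer_edgeSet he'
  have hp := Sym2.out_fst_mem e
  exact Set.disjoint_left.mp (h ((hy _ hp).symm.trans (hy' _ hp))) heT heT'

theorem disjoint_boxFiber_boxFiber {W W' : H.Subgraph} {x x' : α}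
    (h : x = x' → Disjoint W.edgeSet W'.edgeSet) :
    Disjoint (boxFiber G x W).edgeSet (boxFiber G x' W').edgeSet := by
  refine Set.disjoint_left.mpr fun e he he' => ?_
  obtain ⟨heW, hx⟩ := of_mem_boxFiber_edgeSet he
  obtain ⟨heW', hx'⟩ := of_mem_boxFiber_edgeSet he'
  have hp := Sym2.out_fst_mem e
  exact Set.disjoint_left.mp (h ((hx _ hp).symm.trans (hx' _ hp))) heW heW'

def layerComb (T : G.Subgraph) (y : β) (X : Set α) (W : H.Subgraph) : (G □ H).Subgraph :=
  boxLayer H T y ⊔ ⨆ x : X, boxFiber G x W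

def fiberComb (x : α) (W : H.Subgraph) (Y : Set β) (T : G.Subgraph) : (G □ H).Subgraph :=
  boxFiber G x W ⊔ ⨆ y : Y, boxLayer H T y

theorem layerComb_connected {T : G.Subgraph} {W : H.Subgraph} (hT : T.Connected)
    (hW : W.Connected) {y : β} (hy : y ∈ W.verts) {X : Set α} (hX : X ⊆ T.verts) :
    (layerComb T y X W).Connected :=
  Subgraph.connected_sup_iSup (boxLayer_connected hT y) (fun x => boxFiber_connected hW x.1)
    fun x => ⟨(x, y), mk_mem_boxLayer_verts (hX x.2) y, mk_mem_boxFiber_verts x.1 hy⟩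

theorem fiberComb_connected {T : G.Subgraph} {W : H.Subgraph} (hT : T.Connected)
    (hW : W.Connected) {x : α} (hx : x ∈ T.verts) {Y : Set β} (hY : Y ⊆ W.verts) :
    (fiberComb x W Y T).Connected :=
  Subgraph.connected_sup_iSup (boxFiber_connected hW x) (fun y => boxLayer_connected hT y.1)
    fun y => ⟨(x, y), mk_mem_boxFiber_verts x (hY y.2), mk_mem_boxLayer_verts hx y.1⟩

theorem mk_mem_layerComb_verts_of_mem_layer {T : G.Subgraph} {x : α} (hx : x ∈ T.verts)
    (y : β) (X : Set α) (W : H.Subgraph) : (x, y) ∈ (layerComb T y X W).verts :=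
  Or.inl (mk_mem_boxLayer_verts hx y)

theorem mk_mem_layerComb_verts_of_mem_fiber {W : H.Subgraph} {x : α} {X : Set α} (hx : x ∈ X)
    {y' : β} (hy' : y' ∈ W.verts) (T : G.Subgraph) (y : β) :
    (x, y') ∈ (layerComb T y X W).verts :=
  Or.inr (Subgraph.verts_iSup ▸ Set.mem_iUnion.mpr ⟨⟨x, hx⟩, mk_mem_boxFiber_verts x hy'⟩)

theorem mk_mem_fiberComb_verts_of_mem_fiber {W : H.Subgraph} {y : β} (hy : y ∈ W.verts)
    (x : α) (Y : Set β) (T : G.Subgraph) : (x, y) ∈ (fiberComb x W Y T).verts :=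
  Or.inl (mk_mem_boxFiber_verts x hy)

theorem mk_mem_fiberComb_verts_of_mem_layer {T : G.Subgraph} {y : β} {Y : Set β} (hy : y ∈ Y)
    {x' : α} (hx' : x' ∈ T.verts) (W : H.Subgraph) (x : α) :
    (x', y) ∈ (fiberComb x W Y T).verts :=
  Or.inr (Subgraph.verts_iSup ▸ Set.mem_iUnion.mpr ⟨⟨y, hy⟩, mk_mem_boxLayer_verts hx' y⟩)

section Steiner

variable {S : Set (α × β)} {T : G.Subgraph} {W : H.Subgraph}

theorem subset_layerComb_verts (hW : Prod.snd '' S ⊆ W.verts) (y : β) :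
    S ⊆ (layerComb T y (Prod.fst '' S) W).verts := fun p hp =>
  mk_mem_layerComb_verts_of_mem_fiber (Set.mem_image_of_mem _ hp) (hW ⟨p, hp, rfl⟩) T y

theorem subset_layerComb_verts_of_iff {x₀ : α} {y₀ : β}
    (hS₀ : ∀ p ∈ S, p.1 = x₀ ↔ p.2 = y₀)
    (hT : Prod.fst '' S ⊆ T.verts) (hW : Prod.snd '' S ⊆ W.verts) :
    S ⊆ (layerComb T y₀ (Prod.fst '' S \ {x₀}) W).verts := by
  rintro ⟨x, y⟩ hp
  by_cases hx : x = x₀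
  · obtain rfl : y = y₀ := (hS₀ _ hp).mp hx
    exact mk_mem_layerComb_verts_of_mem_layer (hT ⟨_, hp, rfl⟩) _ _ _
  · refine mk_mem_layerComb_verts_of_mem_fiber ?_ (hW ⟨_, hp, rfl⟩) _ _
    exact ⟨⟨_, hp, rfl⟩, hx⟩

theorem subset_fiberComb_verts_of_iff {x₀ : α} {y₀ : β}
    (hS₀ : ∀ p ∈ S, p.1 = x₀ ↔ p.2 = y₀)
    (hT : Prod.fst '' S ⊆ T.verts) (hW : Prod.snd '' S ⊆ W.verts) :
    S ⊆ (fiberComb x₀ W (Prod.snd '' S \ {y₀}) T).verts := by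
  rintro ⟨x, y⟩ hp
  by_cases hy : y = y₀
  · obtain rfl : x = x₀ := (hS₀ _ hp).mpr hy
    exact mk_mem_fiberComb_verts_of_mem_fiber (hW ⟨_, hp, rfl⟩) _ _ _
  · refine mk_mem_fiberComb_verts_of_mem_layer ?_ (hT ⟨_, hp, rfl⟩) _ _
    exact ⟨⟨_, hp, rfl⟩, hy⟩

end Steiner

section Disjoint

variable {T T' : G.Subgraph} {W W' : H.Subgraph}

theorem disjoint_layerComb {y y' : β} {X X' : Set α}
    (hT : y = y' → Disjoint T.edgeSet T'.edgeSet)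
    (hW : ∀ x ∈ X, x ∈ X' → Disjoint W.edgeSet W'.edgeSet) :
    Disjoint (layerComb T y X W).edgeSet (layerComb T' y' X' W').edgeSet := by
  simp only [layerComb, Subgraph.edgeSet_sup, Subgraph.edgeSet_iSup, Set.disjoint_union_left,
    Set.disjoint_union_right, Set.disjoint_iUnion_left, Set.disjoint_iUnion_right]
  refine ⟨⟨disjoint_boxLayer_boxLayer hT, fun _ => (disjoint_boxLayer_boxFiber ..).symm⟩,
    fun x' => ⟨disjoint_boxLayer_boxFiber .., fun x => ?_⟩⟩
  exact disjoint_boxFiber_boxFiber fun h => hW x x.2 (h ▸ x'.2)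

theorem disjoint_fiberComb {x x' : α} {Y Y' : Set β}
    (hW : x = x' → Disjoint W.edgeSet W'.edgeSet)
    (hT : ∀ y ∈ Y, y ∈ Y' → Disjoint T.edgeSet T'.edgeSet) :
    Disjoint (fiberComb x W Y T).edgeSet (fiberComb x' W' Y' T').edgeSet := by
  simp only [fiberComb, Subgraph.edgeSet_sup, Subgraph.edgeSet_iSup, Set.disjoint_union_left,
    Set.disjoint_union_right, Set.disjoint_iUnion_left, Set.disjoint_iUnion_right]
  refine ⟨⟨disjoint_boxFiber_boxFiber hW, fun _ => disjoint_boxLayer_boxFiber ..⟩,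
    fun y' => ⟨(disjoint_boxLayer_boxFiber ..).symm, fun y => ?_⟩⟩
  exact disjoint_boxLayer_boxLayer fun h => hT y y.2 (h ▸ y'.2)

theorem disjoint_fiberComb_layerComb {x : α} {Y : Set β} {y' : β} {X' : Set α}
    (hW : x ∈ X' → Disjoint W.edgeSet W'.edgeSet)
    (hT : y' ∈ Y → Disjoint T.edgeSet T'.edgeSet) :
    Disjoint (fiberComb x W Y T).edgeSet (layerComb T' y' X' W').edgeSet := by
  simp only [fiberComb, layerComb, Subgraph.edgeSet_sup, Subgraph.edgeSet_iSup,
    Set.disjoint_union_left, Set.disjoint_union_right, Set.disjoint_iUnion_left,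
    Set.disjoint_iUnion_right]
  refine ⟨⟨(disjoint_boxLayer_boxFiber ..).symm,
    fun y => disjoint_boxLayer_boxLayer fun h => hT (h ▸ y.2)⟩,
    fun x' => ⟨disjoint_boxFiber_boxFiber fun h => hW (h ▸ x'.2), fun _ => ?_⟩⟩
  exact disjoint_boxLayer_boxFiber ..

end Disjoint

end SimpleGraph

section Construction

open SimpleGraph Function

variable {α β : Type*} {G : SimpleGraph α} {H : SimpleGraph β}

theorem hasEDSteinerTrees_boxProd_of_connectors {a b : ℕ} {S : Set (α × β)} {x₀ : α}
    {y₀ : β} (h₀ : (x₀, y₀) ∈ S) (hS₀ : ∀ p ∈ S, p.1 = x₀ ↔ p.2 = y₀)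
    {TG : Fin a → G.Subgraph} (hTG : ∀ i, IsSteinerTree G (Prod.fst '' S) (TG i))
    (hTGd : ∀ i j, i ≠ j → Disjoint (TG i).edgeSet (TG j).edgeSet)
    {TH : Fin b → H.Subgraph} (hTH : ∀ n, IsSteinerTree H (Prod.snd '' S) (TH n))
    (hTHd : ∀ n m, n ≠ m → Disjoint (TH n).edgeSet (TH m).edgeSet)
    {σ : Fin a → Fin b} {d : Fin b → Fin a × β} (hσ : Injective σ) (hd : Injective d)
    (hdσ : ∀ i, d (σ i) = (i, y₀))
    (hd_mem : ∀ n, (d n).2 ∈ (TH n).verts ∧ ((d n).2 ∈ Prod.snd '' S → (d n).2 = y₀)) :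
    HasEDSteinerTrees (G □ H) S (a + b) := by
  classical
  -- The reserved `H`-tree `σ i` skips the fibre over `x₀`, which `A i` uses.
  let X n : Set α := if n ∈ Set.range σ then Prod.fst '' S \ {x₀} else Prod.fst '' S
  let A i := fiberComb x₀ (TH (σ i)) (Prod.snd '' S \ {y₀}) (TG i)
  let D n := layerComb (TG (d n).1) (d n).2 (X n) (TH n)
  have hd_not_mem n : (d n).2 ∉ Prod.snd '' S \ {y₀} := fun h => h.2 ((hd_mem n).2 h.1)
  have hX_ne n : x₀ ∈ X n → n ∉ Set.range σ := by
    intro hx hn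
    simp only [X, if_pos hn] at hx
    exact hx.2 rfl
  have hA_conn i : (A i).Connected :=
    fiberComb_connected (hTG i).connected (hTH _).connected ((hTG i).1 ⟨_, h₀, rfl⟩)
      (Set.sdiff_subset.trans (hTH _).1)
  have hX_sub n : X n ⊆ Prod.fst '' S := by
    unfold X
    split_ifs
    exacts [Set.sdiff_subset, subset_rfl]
  have hD_conn n : (D n).Connected :=
    layerComb_connected (hTG _).connected (hTH n).connected (hd_mem n).1
      ((hX_sub n).trans (hTG _).1)
  have hD_S n : S ⊆ (D n).verts := by
    by_cases hn : n ∈ Set.range σ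
    · obtain ⟨i, rfl⟩ := hn
      simpa only [D, X, Set.mem_range_self, if_true, hdσ] using
        subset_layerComb_verts_of_iff hS₀ (hTG _).1 (hTH _).1
    · simpa only [D, X, hn, if_false] using subset_layerComb_verts (hTH n).1 _
  have hdisj : Pairwise (Disjoint on fun t => (Sum.elim A D t).edgeSet) := by
    rintro (i | n) (j | m) hne
    · exact disjoint_fiberComb (fun _ => hTHd _ _ (hσ.ne (by simpa using hne)))
        fun _ _ _ => hTGd _ _ (by simpa using hne)
    · exact disjoint_fiberComb_layerComb (fun h => hTHd _ _ fun h' => hX_ne m h ⟨i, h'⟩)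
        fun h => absurd h (hd_not_mem m)
    · exact (disjoint_fiberComb_layerComb (fun h => hTHd _ _ fun h' => hX_ne n h ⟨j, h'⟩)
        fun h => absurd h (hd_not_mem n)).symm
    · have hnm : n ≠ m := by simpa using hne
      exact disjoint_layerComb (fun h => hTGd _ _ fun h' => hnm (hd (Prod.ext h' h)))
        fun _ _ _ => hTHd _ _ hnm
  simpa using hasEDSteinerTrees_of_connected (Sum.elim A D) (Sum.rec hA_conn hD_conn)
    (Sum.rec (fun i => subset_fiberComb_verts_of_iff hS₀ (hTG i).1 (hTH _).1) hD_S) hdisj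

end Construction

/-- if λ_k(G)=a, λ_k(H)=b, b ≥ a ≥ ⌊k/2⌋ and S ⊆ V(G □ H) with |S|=k has
    projections with exactly k distinct elements in each coordinate, then there are at
    least a + b pairwise edge-disjoint S-Steiner trees in G □ H. -/
theorem stmt8 {α β : Type*} [Fintype α] [Fintype β] [DecidableEq α] [DecidableEq β]
    (G : SimpleGraph α) (H : SimpleGraph β)
    (hG : G.Connected) (hH : H.Connected) (k a b : ℕ)
    (ha : genLambda G k = a) (hb : genLambda H k = b)
    (hab : a ≤ b) (hak : k / 2 ≤ a)
    (S : Finset (α × β)) (hS : S.card = k)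
    (hSG : (S.image Prod.fst).card = k) (hSH : (S.image Prod.snd).card = k) :
    HasEDSteinerTrees (G □ H) ↑S (a + b) := by
  rcases Nat.lt_or_ge k 2 with hk | hk
  · obtain ⟨p, hp⟩ : ∃ p : α × β, (S : Set (α × β)) ⊆ {p} := by
      rcases S.eq_empty_or_nonempty with rfl | ⟨p, hp⟩
      · exact ⟨(hG.nonempty.some, hH.nonempty.some), by simp⟩
      · exact ⟨p, fun q hq => Finset.card_le_one.mp (by omega) _ hq _ hp⟩
    exact hasEDSteinerTrees_of_subset_singleton hp _
  have hfst : Set.InjOn Prod.fst (S : Set (α × β)) :=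
    Finset.card_image_iff.mp (hSG.trans hS.symm)
  have hsnd : Set.InjOn Prod.snd (S : Set (α × β)) :=
    Finset.card_image_iff.mp (hSH.trans hS.symm)
  obtain ⟨⟨x₀, y₀⟩, h₀⟩ : S.Nonempty := Finset.card_pos.mp (by omega)
  have hS₀ : ∀ p ∈ (S : Set (α × β)), p.1 = x₀ ↔ p.2 = y₀ := fun p hp =>
    ⟨fun h => congrArg Prod.snd (hfst hp h₀ h), fun h => congrArg Prod.fst (hsnd hp h₀ h)⟩
  have hG' := hasEDSteinerTrees_genLambda (Γ := G) _ (hSG ▸ hk)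
  have hH' := hasEDSteinerTrees_genLambda (Γ := H) _ (hSH ▸ hk)
  rw [hSG, ha, Finset.coe_image] at hG'
  rw [hSH, hb, Finset.coe_image] at hH'
  obtain ⟨TG, hTG, hTGd⟩ := hG'
  obtain ⟨TH, hTH, hTHd⟩ := hH'
  obtain ⟨σ, d, hσ, hd, hdσ, hd_out⟩ := exists_connectors (A := S.image Prod.snd) (hSH ▸ hk)
    (hSH ▸ hak) hab (by simpa using hTH) hTHd (Finset.mem_image_of_mem _ h₀)
  simp only [← Finset.mem_coe, Finset.coe_image] at hd_out
  exact hasEDSteinerTrees_boxProd_of_connectors h₀ hS₀ hTG hTGd hTH hTHd hσ hd hdσ hd_out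
end
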